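/- arXiv:2601.20068 — 4 statements merged into one kernel-verified Lean document; each statement's English description precedes it below -/
import Mathlib

section
/- Let M be a smooth manifold with a degenerate metric g (a symmetric (0,2)-tensor) and a vector field ℓ such that g(ℓ,·)=0. Suppose ∇ is an affine connection on M satisfying ∇g = 0 and ∇ℓ = 0. Then the torsion tensor T of ∇ satisfies, for all vector fields X, Y: (L_ℓ g)(X,Y) = g(T(ℓ,X),Y) + g(X,T(ℓ,Y)), where L_ℓ denotes the Lie derivative along ℓ. -/
open scoped BigOperators

noncomputable section

/-- Points of a local coordinate chart `ℝ^d`. -/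
abbrev Pt (d : ℕ) : Type := Fin d → ℝ

/-- A vector field in coordinates: components `X p a = X^a(p)`. -/
abbrev VecField (d : ℕ) : Type := Pt d → Pt d

/-- A 1-form in coordinates: components `ω p a = ω_a(p)`. -/
abbrev OneForm (d : ℕ) : Type := Pt d → Pt d

/-- A (possibly degenerate) symmetric (0,2)-tensor in coordinates. -/
abbrev DegMetric (d : ℕ) : Type := Pt d → Fin d → Fin d → ℝ

/-- Christoffel symbols of an affine connection: `Γ p a b c = Γ^a_{bc}`,
with `∇_c X^a = ∂_c X^a + Γ^a_{bc} X^b`. -/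
abbrev Conn (d : ℕ) : Type := Pt d → Fin d → Fin d → Fin d → ℝ

variable {d : ℕ}

/-- Partial derivative `∂_a f (p)`. -/
def pd (a : Fin d) (f : Pt d → ℝ) (p : Pt d) : ℝ := fderiv ℝ f p (Pi.single a 1)

/-- Smoothness of a scalar function on the chart. -/
def SmoothFn (f : Pt d → ℝ) : Prop := ContDiff ℝ (⊤ : ℕ∞) f

/-- Covariant derivative of a vector field: `∇_c X^a`. -/
def covVec (Γ : Conn d) (X : VecField d) (p : Pt d) (a c : Fin d) : ℝ :=
  pd c (fun q => X q a) p + ∑ b, Γ p a b c * X p b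

/-- Covariant derivative of a 1-form: `∇_c ω_b`. -/
def covForm (Γ : Conn d) (ω : OneForm d) (p : Pt d) (b c : Fin d) : ℝ :=
  pd c (fun q => ω q b) p - ∑ a, Γ p a b c * ω p a

/-- Covariant derivative of a (0,2)-tensor: `∇_c B_{ab}`. -/
def covT2 (Γ : Conn d) (B : DegMetric d) (p : Pt d) (a b c : Fin d) : ℝ :=
  pd c (fun q => B q a b) p - (∑ e, Γ p e a c * B p e b) - ∑ e, Γ p e b c * B p a e

/-- Torsion tensor `T^a_{bc} = Γ^a_{cb} - Γ^a_{bc}` (so that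
`T(X,Y) = ∇_X Y - ∇_Y X - [X,Y]`). -/
def tor (Γ : Conn d) (p : Pt d) (a b c : Fin d) : ℝ := Γ p a c b - Γ p a b c

/-- Lie bracket of vector fields. -/
def lieB (X Y : VecField d) (p : Pt d) (a : Fin d) : ℝ :=
  fderiv ℝ (fun q => Y q a) p (X p) - fderiv ℝ (fun q => X q a) p (Y p)

/-- Components of the Lie derivative `(L_ℓ g)_{ab}`. -/
def lieMet (ℓ : VecField d) (g : DegMetric d) (p : Pt d) (a b : Fin d) : ℝ :=
  fderiv ℝ (fun q => g q a b) p (ℓ p)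
  + (∑ c, g p c b * pd a (fun q => ℓ q c) p)
  + ∑ c, g p a c * pd b (fun q => ℓ q c) p

/-- Components of the Lie derivative `(L_ℓ ω)_a`. -/
def lieForm (ℓ : VecField d) (ω : OneForm d) (p : Pt d) (a : Fin d) : ℝ :=
  fderiv ℝ (fun q => ω q a) p (ℓ p) + ∑ c, ω p c * pd a (fun q => ℓ q c) p

/-- A section `T ∈ Γ(TM ⊗ Λ²T*M)` (components `T p a b c = T^a_{bc}`) is *minimal*
with respect to `(g, ℓ, ω)`. -/
def IsMinimal (g : DegMetric d) (ℓ : VecField d) (ω : OneForm d)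
    (T : Pt d → Fin d → Fin d → Fin d → ℝ) : Prop :=
  (∀ p a b c, T p a b c = - T p a c b) ∧
  (∀ p b c, (∑ e, ∑ a, g p e c * T p e a b * ℓ p a) = (1/2) * lieMet ℓ g p b c) ∧
  (∀ p b, (∑ e, ∑ a, ω p e * T p e a b * ℓ p a) = lieForm ℓ ω p b) ∧
  (∀ (p u v : Pt d), (∑ a, ω p a * u a) = 0 → (∑ a, ω p a * v a) = 0 →
      ∀ c, (∑ a, ∑ b, (T p c a b) * u a * v b) = 0)

/-- The torsion of `Γ` is minimal with respect to `(g, ℓ, ω)`. -/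
def MinimalTorsion (g : DegMetric d) (ℓ : VecField d) (ω : OneForm d) (Γ : Conn d) : Prop :=
  IsMinimal g ℓ ω (fun p => tor Γ p)

/-- A Carrollian structure in coordinates: a smooth degenerate metric of signature
`(0,+,…,+)` whose one-dimensional null space is spanned by the nowhere-vanishing `ℓ`. -/
structure IsCarroll (g : DegMetric d) (ℓ : VecField d) : Prop where
  smooth_g : ∀ a b, SmoothFn (fun p => g p a b)
  smooth_ℓ : ∀ a, SmoothFn (fun p => ℓ p a)
  symm : ∀ p a b, g p a b = g p b a
  posSemidef : ∀ (p v : Pt d), 0 ≤ ∑ a, ∑ b, g p a b * v a * v b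
  null : ∀ p b, (∑ a, g p a b * ℓ p a) = 0
  nonvanishing : ∀ p, ℓ p ≠ 0
  radical : ∀ (p v : Pt d), (∀ b, (∑ a, g p a b * v a) = 0) → ∃ c : ℝ, v = c • ℓ p

/-- Curvature tensor `R^a_{bce} = ∂_c Γ^a_{be} - ∂_e Γ^a_{bc} + Γ^a_{fc}Γ^f_{be} - Γ^a_{fe}Γ^f_{bc}`. -/
def Riem (Γ : Conn d) (p : Pt d) (a b c e : Fin d) : ℝ :=
  pd c (fun q => Γ q a b e) p - pd e (fun q => Γ q a b c) p
  + (∑ f, Γ p a f c * Γ p f b e) - ∑ f, Γ p a f e * Γ p f b c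

/-- Covariant derivative of the curvature: `∇_f R^a_{bce}`. -/
def covRiem (Γ : Conn d) (p : Pt d) (a b c e f : Fin d) : ℝ :=
  pd f (fun q => Riem Γ q a b c e) p
  + (∑ x, Γ p a x f * Riem Γ p x b c e)
  - (∑ x, Γ p x b f * Riem Γ p a x c e)
  - (∑ x, Γ p x c f * Riem Γ p a b x e)
  - ∑ x, Γ p x e f * Riem Γ p a b c x

/-- Levi-Civita Christoffel symbols of a (nondegenerate) metric `g` with inverse `gi`. -/
def lc (g gi : DegMetric d) (p : Pt d) (a b c : Fin d) : ℝ :=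
  (1/2) * ∑ e, gi p a e *
    (pd b (fun q => g q c e) p + pd c (fun q => g q e b) p - pd e (fun q => g q b c) p)


lemma fderiv_apply_eq_sum_pd {f : Pt d → ℝ} {p : Pt d} (v : Pt d) :
    fderiv ℝ f p v = ∑ c, v c * pd c f p := by
  have hv : v = ∑ c, v c • (Pi.single c (1:ℝ) : Pt d) := by
    funext i
    simp [Finset.sum_apply, Pi.single_apply]
  conv_lhs => rw [hv]
  rw [map_sum]
  simp [pd, smul_eq_mul]


def eSwap14 {d : ℕ} : (Fin d × Fin d × Fin d × Fin d) ≃ (Fin d × Fin d × Fin d × Fin d) where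
  toFun x := (x.2.2.2, x.2.1, x.2.2.1, x.1)
  invFun x := (x.2.2.2, x.2.1, x.2.2.1, x.1)
  left_inv _ := rfl
  right_inv _ := rfl

def eSwap24 {d : ℕ} : (Fin d × Fin d × Fin d × Fin d) ≃ (Fin d × Fin d × Fin d × Fin d) where
  toFun x := (x.1, x.2.2.2, x.2.2.1, x.2.1)
  invFun x := (x.1, x.2.2.2, x.2.2.1, x.2.1)
  left_inv _ := rfl
  right_inv _ := rfl

lemma perm14 (F : Fin d → Fin d → Fin d → Fin d → ℝ) :
    ∑ a, ∑ b, ∑ c, ∑ e, F a b c e = ∑ a, ∑ b, ∑ c, ∑ e, F e b c a := by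
  have h := Fintype.sum_equiv (eSwap14 (d := d))
    (fun x : Fin d × Fin d × Fin d × Fin d => F x.1 x.2.1 x.2.2.1 x.2.2.2)
    (fun x : Fin d × Fin d × Fin d × Fin d => F x.2.2.2 x.2.1 x.2.2.1 x.1)
    (fun x => rfl)
  simpa [Fintype.sum_prod_type] using h

lemma perm24 (F : Fin d → Fin d → Fin d → Fin d → ℝ) :
    ∑ a, ∑ b, ∑ c, ∑ e, F a b c e = ∑ a, ∑ b, ∑ c, ∑ e, F a e c b := by
  have h := Fintype.sum_equiv (eSwap24 (d := d))
    (fun x : Fin d × Fin d × Fin d × Fin d => F x.1 x.2.1 x.2.2.1 x.2.2.2)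
    (fun x : Fin d × Fin d × Fin d × Fin d => F x.1 x.2.2.2 x.2.2.1 x.2.1)
    (fun x => rfl)
  simpa [Fintype.sum_prod_type] using h

lemma perm34 (F : Fin d → Fin d → Fin d → Fin d → ℝ) :
    ∑ a, ∑ b, ∑ c, ∑ e, F a b c e = ∑ a, ∑ b, ∑ c, ∑ e, F a b e c := by
  refine Finset.sum_congr rfl fun _ _ => Finset.sum_congr rfl fun _ _ => Finset.sum_comm

lemma key_algebra (G : Fin d → Fin d → ℝ) (C : Fin d → Fin d → Fin d → ℝ) (x y l : Fin d → ℝ) :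
    ∑ a, ∑ b, ((∑ c, l c * ((∑ e, C e a c * G e b) + ∑ e, C e b c * G a e)) * x a * y b
      + G a b * (∑ c, x c * (-∑ e, C a e c * l e)) * y b
      + G a b * x a * (∑ c, y c * (-∑ e, C b e c * l e)))
    = (∑ a, ∑ b, G a b * (∑ e, ∑ c, (C a c e - C a e c) * l e * x c) * y b)
      + ∑ a, ∑ b, G a b * x a * (∑ e, ∑ c, (C b c e - C b e c) * l e * y c) := by
  have h1 : (∑ a, ∑ b, ∑ c, ∑ e, G a b * (C a e c * l c * x e) * y b)
      = ∑ a, ∑ b, ∑ c, ∑ e, l c * (C e a c * G e b) * x a * y b := by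
    rw [perm14 (fun a b c e => l c * (C e a c * G e b) * x a * y b)]
    exact Finset.sum_congr rfl fun _ _ => Finset.sum_congr rfl fun _ _ =>
      Finset.sum_congr rfl fun _ _ => Finset.sum_congr rfl fun _ _ => by ring
  have h2 : (∑ a, ∑ b, ∑ c, ∑ e, G a b * (C a c e * l c * x e) * y b)
      = ∑ a, ∑ b, ∑ c, ∑ e, G a b * (x c * (C a e c * l e)) * y b := by
    rw [perm34 (fun a b c e => G a b * (x c * (C a e c * l e)) * y b)]
    exact Finset.sum_congr rfl fun _ _ => Finset.sum_congr rfl fun _ _ =>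
      Finset.sum_congr rfl fun _ _ => Finset.sum_congr rfl fun _ _ => by ring
  have h3 : (∑ a, ∑ b, ∑ c, ∑ e, G a b * x a * (C b e c * l c * y e))
      = ∑ a, ∑ b, ∑ c, ∑ e, l c * (C e b c * G a e) * x a * y b := by
    rw [perm24 (fun a b c e => l c * (C e b c * G a e) * x a * y b)]
    exact Finset.sum_congr rfl fun _ _ => Finset.sum_congr rfl fun _ _ =>
      Finset.sum_congr rfl fun _ _ => Finset.sum_congr rfl fun _ _ => by ring
  have h4 : (∑ a, ∑ b, ∑ c, ∑ e, G a b * x a * (C b c e * l c * y e))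
      = ∑ a, ∑ b, ∑ c, ∑ e, G a b * x a * (y c * (C b e c * l e)) := by
    rw [perm34 (fun a b c e => G a b * x a * (y c * (C b e c * l e)))]
    exact Finset.sum_congr rfl fun _ _ => Finset.sum_congr rfl fun _ _ =>
      Finset.sum_congr rfl fun _ _ => Finset.sum_congr rfl fun _ _ => by ring
  simp only [Finset.sum_mul, Finset.mul_sum, mul_neg, neg_mul, Finset.sum_neg_distrib,
    sub_mul, mul_sub, Finset.sum_sub_distrib, Finset.sum_add_distrib, add_mul, mul_add]
  rw [h1, h2, h3, h4]
  ring


/-- If `∇g = 0`, `∇ℓ = 0` and `g(ℓ,·) = 0`, then the torsion `T` of `∇`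
satisfies `(L_ℓ g)(X,Y) = g(T(ℓ,X),Y) + g(X,T(ℓ,Y))` for all vector fields `X, Y`, where
`(L_ℓ g)(X,Y) = ℓ(g(X,Y)) - g([ℓ,X],Y) - g(X,[ℓ,Y])`. -/
theorem stmt0 {d : ℕ} (g : DegMetric d) (ℓ X Y : VecField d) (Γ : Conn d)
    (hg : ∀ a b, SmoothFn (fun p => g p a b))
    (hℓ : ∀ a, SmoothFn (fun p => ℓ p a))
    (hX : ∀ a, SmoothFn (fun p => X p a))
    (hY : ∀ a, SmoothFn (fun p => Y p a))
    (hΓ : ∀ a b c, SmoothFn (fun p => Γ p a b c))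
    (hsymm : ∀ p a b, g p a b = g p b a)
    (hnull : ∀ p b, (∑ a, g p a b * ℓ p a) = 0)
    (hpar_ℓ : ∀ p a c, covVec Γ ℓ p a c = 0)
    (hpar_g : ∀ p a b c, covT2 Γ g p a b c = 0) :
    ∀ p : Pt d,
      fderiv ℝ (fun q => ∑ a, ∑ b, g q a b * X q a * Y q b) p (ℓ p)
        - (∑ a, ∑ b, g p a b * lieB ℓ X p a * Y p b)
        - (∑ a, ∑ b, g p a b * X p a * lieB ℓ Y p b)
      = (∑ a, ∑ b, g p a b * (∑ e, ∑ c, tor Γ p a e c * ℓ p e * X p c) * Y p b)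
        + (∑ a, ∑ b, g p a b * X p a * (∑ e, ∑ c, tor Γ p b e c * ℓ p e * Y p c)) := by
  intro p
  have dg : ∀ a b, DifferentiableAt ℝ (fun q => g q a b) p :=
    fun a b => ((hg a b).differentiable (by simp)).differentiableAt
  have dX : ∀ a, DifferentiableAt ℝ (fun q => X q a) p :=
    fun a => ((hX a).differentiable (by simp)).differentiableAt
  have dY : ∀ a, DifferentiableAt ℝ (fun q => Y q a) p :=
    fun a => ((hY a).differentiable (by simp)).differentiableAt
  have hpdℓ : ∀ a c, pd c (fun q => ℓ q a) p = -∑ e, Γ p a e c * ℓ p e := by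
    intro a c
    have h := hpar_ℓ p a c
    unfold covVec at h
    linarith
  have hpdg : ∀ a b c, pd c (fun q => g q a b) p
      = (∑ e, Γ p e a c * g p e b) + ∑ e, Γ p e b c * g p a e := by
    intro a b c
    have h := hpar_g p a b c
    unfold covT2 at h
    linarith
  -- derivative of the double sum
  have hprod : ∀ a b, DifferentiableAt ℝ (fun q => g q a b * X q a * Y q b) p :=
    fun a b => ((dg a b).mul (dX a)).mul (dY b)
  have hfd : fderiv ℝ (fun q => ∑ a, ∑ b, g q a b * X q a * Y q b) p (ℓ p)
      = ∑ a, ∑ b, fderiv ℝ (fun q => g q a b * X q a * Y q b) p (ℓ p) := by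
    rw [fderiv_fun_sum (fun a _ => DifferentiableAt.fun_sum (fun b _ => hprod a b))]
    rw [ContinuousLinearMap.sum_apply]
    refine Finset.sum_congr rfl fun a _ => ?_
    rw [fderiv_fun_sum (fun b _ => hprod a b), ContinuousLinearMap.sum_apply]
  have hmul : ∀ a b, fderiv ℝ (fun q => g q a b * X q a * Y q b) p (ℓ p)
      = fderiv ℝ (fun q => g q a b) p (ℓ p) * X p a * Y p b
        + g p a b * fderiv ℝ (fun q => X q a) p (ℓ p) * Y p b
        + g p a b * X p a * fderiv ℝ (fun q => Y q b) p (ℓ p) := by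
    intro a b
    rw [fderiv_fun_mul ((dg a b).fun_mul (dX a)) (dY b), fderiv_fun_mul (dg a b) (dX a)]
    simp only [ContinuousLinearMap.add_apply, ContinuousLinearMap.smul_apply, smul_eq_mul,
      ContinuousLinearMap.coe_smul', Pi.smul_apply]
    ring
  have e2 : fderiv ℝ (fun q => ∑ a, ∑ b, g q a b * X q a * Y q b) p (ℓ p)
        - (∑ a, ∑ b, g p a b * lieB ℓ X p a * Y p b)
        - (∑ a, ∑ b, g p a b * X p a * lieB ℓ Y p b)
      = ∑ a, ∑ b, ((∑ c, ℓ p c * ((∑ e, Γ p e a c * g p e b) + ∑ e, Γ p e b c * g p a e))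
            * X p a * Y p b
          + g p a b * (∑ c, X p c * (-∑ e, Γ p a e c * ℓ p e)) * Y p b
          + g p a b * X p a * (∑ c, Y p c * (-∑ e, Γ p b e c * ℓ p e))) := by
    rw [hfd]
    simp only [← Finset.sum_sub_distrib]
    refine Finset.sum_congr rfl fun a _ => ?_
    refine Finset.sum_congr rfl fun b _ => ?_
    rw [hmul a b]
    simp only [lieB]
    rw [fderiv_apply_eq_sum_pd (f := fun q => g q a b) (ℓ p),
        fderiv_apply_eq_sum_pd (f := fun q => ℓ q a) (X p),
        fderiv_apply_eq_sum_pd (f := fun q => ℓ q b) (Y p)]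
    simp only [hpdg, hpdℓ]
    ring
  rw [e2]
  simp only [tor]
  exact key_algebra (g p) (Γ p) (X p) (Y p) (ℓ p)


end
end

section
/- Let (M,g,ℓ) be a Carrollian structure equipped with a 1-form ω satisfying ω(ℓ)=1. Then there exists a unique section T of TM ⊗ Λ²T*M satisfying the three conditions: (1) g(T(ℓ,X),Y) = ½(L_ℓ g)(X,Y) for all vector fields X,Y; (2) ω(T(ℓ,X)) = (L_ℓ ω)(X) for all X; and (3) T(U,V)=0 for all U,V in the kernel of ω. -/
open scoped BigOperators

noncomputable section

variable {d : ℕ}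

/-! ### Auxiliary lemmas: calculus -/

lemma fderiv_eq_sum_pd (f : Pt d → ℝ) (p v : Pt d) :
    fderiv ℝ f p v = ∑ b, v b * pd b f p := by
  have hv : v = ∑ b, v b • (Pi.single b 1 : Pt d) := by
    funext j
    simp [Finset.sum_apply, Pi.single_apply]
  conv_lhs => rw [hv]
  rw [map_sum]
  simp [pd]

lemma fderiv_sum_mul (f g : Fin d → Pt d → ℝ)
    (hf : ∀ c, ContDiff ℝ (⊤ : ℕ∞) (f c)) (hg : ∀ c, ContDiff ℝ (⊤ : ℕ∞) (g c)) (p v : Pt d) :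
    fderiv ℝ (fun q => ∑ c, f c q * g c q) p v
      = ∑ c, (fderiv ℝ (f c) p v * g c p + f c p * fderiv ℝ (g c) p v) := by
  have H : HasFDerivAt (fun q => ∑ c, f c q * g c q)
      (∑ c, (f c p • fderiv ℝ (g c) p + g c p • fderiv ℝ (f c) p)) p := by
    apply HasFDerivAt.fun_sum
    intro c _
    exact (((hf c).differentiable (by simp) p).hasFDerivAt).mul
      (((hg c).differentiable (by simp) p).hasFDerivAt)
  rw [H.fderiv]
  simp [ContinuousLinearMap.sum_apply]
  exact Finset.sum_congr rfl fun c _ => by ring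

lemma quad_coeff_zero {a b : ℝ} (ha : 0 ≤ a) (h : ∀ t : ℝ, 0 ≤ a*t^2 + 2*b*t) : b = 0 := by
  have h2 : (0:ℝ) < a + 1 := by linarith
  have h1 := h (-(b/(a+1)))
  have h4 : 0 ≤ (a * (-(b/(a+1)))^2 + 2*b*(-(b/(a+1)))) * (a+1)^2 :=
    mul_nonneg h1 (by positivity)
  have h5 : (a * (-(b/(a+1)))^2 + 2*b*(-(b/(a+1)))) * (a+1)^2
      = a*b^2 - 2*b^2*(a+1) := by field_simp; ring
  rw [h5] at h4
  nlinarith [sq_nonneg b]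

lemma lieMet_symm (g : DegMetric d) (ℓ : VecField d) (hC : IsCarroll g ℓ)
    (p : Pt d) (a b : Fin d) : lieMet ℓ g p a b = lieMet ℓ g p b a := by
  unfold lieMet
  have h1 : (fun q => g q a b) = fun q => g q b a := funext fun q => hC.symm q a b
  rw [h1]
  have h2 : ∀ c, g p c b = g p b c := fun c => hC.symm p c b
  have h3 : ∀ c, g p a c = g p c a := fun c => hC.symm p a c
  simp only [h2, h3]
  ring

lemma carroll_F1 (g : DegMetric d) (ℓ : VecField d) (hC : IsCarroll g ℓ)
    (p : Pt d) (b : Fin d) : ∑ c, lieMet ℓ g p b c * ℓ p c = 0 := by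
  have hz : (fun q => ∑ c, g q b c * ℓ q c) = fun _ => (0:ℝ) := by
    funext q
    calc ∑ c, g q b c * ℓ q c = ∑ c, g q c b * ℓ q c :=
          Finset.sum_congr rfl fun c _ => by rw [hC.symm q b c]
      _ = 0 := hC.null q b
  have hd0 : fderiv ℝ (fun q => ∑ c, g q b c * ℓ q c) p (ℓ p) = 0 := by
    rw [hz]; simp
  rw [fderiv_sum_mul (fun c q => g q b c) (fun c q => ℓ q c)
    (fun c => hC.smooth_g b c) (fun c => hC.smooth_ℓ c) p (ℓ p)] at hd0
  unfold lieMet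
  simp only [add_mul]
  rw [Finset.sum_add_distrib, Finset.sum_add_distrib]
  have hT2 : ∑ c, (∑ x, g p x c * pd b (fun q => ℓ q x) p) * ℓ p c = 0 := by
    calc ∑ c, (∑ x, g p x c * pd b (fun q => ℓ q x) p) * ℓ p c
        = ∑ c, ∑ x, g p x c * pd b (fun q => ℓ q x) p * ℓ p c := by
          exact Finset.sum_congr rfl fun c _ => Finset.sum_mul ..
      _ = ∑ x, ∑ c, g p x c * pd b (fun q => ℓ q x) p * ℓ p c := Finset.sum_comm
      _ = ∑ x, pd b (fun q => ℓ q x) p * (∑ c, g p c x * ℓ p c) := by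
          refine Finset.sum_congr rfl fun x _ => ?_
          rw [Finset.mul_sum]
          exact Finset.sum_congr rfl fun c _ => by rw [hC.symm p x c]; ring
      _ = 0 := by
          refine Finset.sum_eq_zero fun x _ => ?_
          rw [hC.null p x, mul_zero]
  rw [hT2, add_zero]
  have hT3 : ∑ c, (∑ x, g p b x * pd c (fun q => ℓ q x) p) * ℓ p c
      = ∑ x, g p b x * fderiv ℝ (fun q => ℓ q x) p (ℓ p) := by
    calc ∑ c, (∑ x, g p b x * pd c (fun q => ℓ q x) p) * ℓ p c
        = ∑ c, ∑ x, g p b x * (ℓ p c * pd c (fun q => ℓ q x) p) := by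
          refine Finset.sum_congr rfl fun c _ => ?_
          rw [Finset.sum_mul]
          exact Finset.sum_congr rfl fun x _ => by ring
      _ = ∑ x, ∑ c, g p b x * (ℓ p c * pd c (fun q => ℓ q x) p) := Finset.sum_comm
      _ = ∑ x, g p b x * fderiv ℝ (fun q => ℓ q x) p (ℓ p) := by
          refine Finset.sum_congr rfl fun x _ => ?_
          rw [← Finset.mul_sum, fderiv_eq_sum_pd (fun q => ℓ q x) p (ℓ p)]
  rw [hT3]
  calc (∑ c, fderiv ℝ (fun q => g q b c) p (ℓ p) * ℓ p c)
        + ∑ x, g p b x * fderiv ℝ (fun q => ℓ q x) p (ℓ p)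
      = ∑ c, (fderiv ℝ (fun q => g q b c) p (ℓ p) * ℓ p c
          + g p b c * fderiv ℝ (fun q => ℓ q c) p (ℓ p)) := by
        rw [Finset.sum_add_distrib]
    _ = 0 := hd0

lemma carroll_F2 (ℓ : VecField d) (ω : OneForm d)
    (hsℓ : ∀ a, SmoothFn (fun p => ℓ p a)) (hω : ∀ a, SmoothFn (fun p => ω p a))
    (hωℓ : ∀ p, (∑ a, ω p a * ℓ p a) = 1)
    (p : Pt d) : ∑ b, lieForm ℓ ω p b * ℓ p b = 0 := by
  have hz : (fun q => ∑ b, ω q b * ℓ q b) = fun _ => (1:ℝ) := funext fun q => hωℓ q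
  have hd0 : fderiv ℝ (fun q => ∑ b, ω q b * ℓ q b) p (ℓ p) = 0 := by
    rw [hz]; simp
  rw [fderiv_sum_mul (fun b q => ω q b) (fun b q => ℓ q b)
    (fun b => hω b) (fun b => hsℓ b) p (ℓ p)] at hd0
  unfold lieForm
  simp only [add_mul]
  rw [Finset.sum_add_distrib]
  have hT2 : ∑ b, (∑ c, ω p c * pd b (fun q => ℓ q c) p) * ℓ p b
      = ∑ c, ω p c * fderiv ℝ (fun q => ℓ q c) p (ℓ p) := by
    calc ∑ b, (∑ c, ω p c * pd b (fun q => ℓ q c) p) * ℓ p b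
        = ∑ b, ∑ c, ω p c * (ℓ p b * pd b (fun q => ℓ q c) p) := by
          refine Finset.sum_congr rfl fun b _ => ?_
          rw [Finset.sum_mul]
          exact Finset.sum_congr rfl fun c _ => by ring
      _ = ∑ c, ∑ b, ω p c * (ℓ p b * pd b (fun q => ℓ q c) p) := Finset.sum_comm
      _ = ∑ c, ω p c * fderiv ℝ (fun q => ℓ q c) p (ℓ p) := by
          refine Finset.sum_congr rfl fun c _ => ?_
          rw [← Finset.mul_sum, fderiv_eq_sum_pd (fun q => ℓ q c) p (ℓ p)]
  rw [hT2]
  calc (∑ b, fderiv ℝ (fun q => ω q b) p (ℓ p) * ℓ p b)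
        + ∑ c, ω p c * fderiv ℝ (fun q => ℓ q c) p (ℓ p)
      = ∑ b, (fderiv ℝ (fun q => ω q b) p (ℓ p) * ℓ p b
          + ω p b * fderiv ℝ (fun q => ℓ q b) p (ℓ p)) := by
        rw [Finset.sum_add_distrib]
    _ = 0 := hd0

/-! ### Auxiliary lemmas: algebra -/

lemma expand_quad (A : Fin d → Fin d → ℝ) (hsymm : ∀ a b, A a b = A b a)
    (x y : Pt d) (t : ℝ) :
    ∑ a, ∑ b, A a b * (x a + t * y a) * (x b + t * y b)
      = (∑ a, ∑ b, A a b * x a * x b) + 2*t*(∑ a, ∑ b, A a b * x a * y b)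
        + t^2 * (∑ a, ∑ b, A a b * y a * y b) := by
  have swap : ∑ a, ∑ b, A a b * y a * x b = ∑ a, ∑ b, A a b * x a * y b := by
    rw [Finset.sum_comm]
    refine Finset.sum_congr rfl fun a _ => Finset.sum_congr rfl fun b _ => by
      rw [hsymm b a]; ring
  calc ∑ a, ∑ b, A a b * (x a + t * y a) * (x b + t * y b)
      = ∑ a, ∑ b, (A a b * x a * x b + t * (A a b * x a * y b)
          + t * (A a b * y a * x b) + t^2 * (A a b * y a * y b)) := by
        exact Finset.sum_congr rfl fun a _ => Finset.sum_congr rfl fun b _ => by ring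
    _ = (∑ a, ∑ b, A a b * x a * x b) + t*(∑ a, ∑ b, A a b * x a * y b)
          + t*(∑ a, ∑ b, A a b * y a * x b) + t^2 * (∑ a, ∑ b, A a b * y a * y b) := by
        simp only [Finset.sum_add_distrib, ← Finset.mul_sum]
    _ = _ := by rw [swap]; ring

lemma sum_delta_mul (f : Fin d → ℝ) (c : Fin d) :
    ∑ a, f a * (if a = c then 1 else 0) = f c := by
  simp [mul_ite]

lemma delta_right (A : Fin d → Fin d → ℝ) (x : Pt d) (c : Fin d) :
    ∑ a, ∑ b, A a b * x a * (if b = c then 1 else 0) = ∑ a, A a c * x a := by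
  refine Finset.sum_congr rfl fun a _ => ?_
  have := sum_delta_mul (fun b => A a b * x a) c
  simpa using this

lemma double_delta (A : Fin d → Fin d → ℝ) (c : Fin d) :
    ∑ a, ∑ b, A a b * (if a = c then 1 else 0) * (if b = c then 1 else 0) = A c c := by
  have h1 : ∀ a, ∑ b, A a b * (if a = c then 1 else 0) * (if b = c then 1 else 0)
      = A a c * (if a = c then 1 else 0) := fun a => by
    have := sum_delta_mul (fun b => A a b * (if a = c then 1 else 0)) c
    simpa using this
  rw [Finset.sum_congr rfl fun a _ => h1 a]
  exact sum_delta_mul (fun a => A a c) c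

lemma sum_mul_sum_assoc (w : Fin d → ℝ) (M : Fin d → Fin d → ℝ) (ψ : Fin d → ℝ) :
    ∑ e, w e * ∑ c, M e c * ψ c = ∑ c, (∑ e, w e * M e c) * ψ c := by
  simp only [Finset.mul_sum]
  rw [Finset.sum_comm]
  refine Finset.sum_congr rfl fun c _ => ?_
  rw [Finset.sum_mul]
  exact Finset.sum_congr rfl fun e _ => by ring

/-! ### The auxiliary Riemannian metric `ĝ = g + ω ⊗ ω` -/

/-- The auxiliary Riemannian metric `ĝ = g + ω ⊗ ω` as a matrix. -/
def Gmat (g : DegMetric d) (ω : OneForm d) (p : Pt d) : Matrix (Fin d) (Fin d) ℝ :=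
  Matrix.of fun a b => g p a b + ω p a * ω p b

lemma Gmat_posDef (g : DegMetric d) (ℓ : VecField d) (ω : OneForm d)
    (hC : IsCarroll g ℓ) (hωℓ : ∀ p, (∑ a, ω p a * ℓ p a) = 1) (p : Pt d) :
    (Gmat g ω p).PosDef := by
  rw [Matrix.posDef_iff_dotProduct_mulVec]
  constructor
  · ext i j
    simp only [Matrix.conjTranspose_apply, Gmat, Matrix.of_apply, star_trivial]
    rw [hC.symm p j i]; ring
  · intro x hx
    have hdp : dotProduct (star x) ((Gmat g ω p).mulVec x)
        = (∑ a, ∑ b, g p a b * x a * x b) + (∑ a, ω p a * x a) * (∑ b, ω p b * x b) := by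
      simp only [dotProduct, Matrix.mulVec, star_trivial, Gmat, Matrix.of_apply]
      rw [Finset.sum_mul_sum]
      rw [← Finset.sum_add_distrib]
      refine Finset.sum_congr rfl fun a _ => ?_
      rw [Finset.mul_sum, ← Finset.sum_add_distrib]
      exact Finset.sum_congr rfl fun b _ => by ring
    rw [hdp]
    set Q := ∑ a, ∑ b, g p a b * x a * x b with hQdef
    set s := ∑ a, ω p a * x a with hsdef
    rcases lt_or_ge 0 (Q + s * s) with h | h
    · exact h
    exfalso
    have hQ : 0 ≤ Q := hC.posSemidef p x
    have hss : 0 ≤ s * s := mul_self_nonneg s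
    have hQ0 : Q = 0 := by linarith
    have hs0 : s = 0 := mul_self_eq_zero.mp (by linarith)
    have hgx : ∀ c, ∑ a, g p a c * x a = 0 := by
      intro c
      have hgcc : 0 ≤ g p c c := by
        have h2 := hC.posSemidef p (fun a => if a = c then 1 else 0)
        rwa [double_delta (g p) c] at h2
      apply quad_coeff_zero hgcc
      intro t
      have hps := hC.posSemidef p (fun a => x a + t * (if a = c then 1 else 0))
      rw [expand_quad (g p) (hC.symm p) x (fun a => if a = c then 1 else 0) t] at hps
      rw [delta_right (g p) x c, double_delta (g p) c, ← hQdef, hQ0] at hps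
      linarith [hps]
    obtain ⟨k, hk⟩ := hC.radical p x hgx
    have hks : s = k := by
      rw [hsdef, hk]
      calc ∑ a, ω p a * (k • ℓ p) a = k * ∑ a, ω p a * ℓ p a := by
            rw [Finset.mul_sum]
            exact Finset.sum_congr rfl fun a _ => by simp [Pi.smul_apply]; ring
        _ = k := by rw [hωℓ p]; ring
    apply hx
    rw [hk, ← hks, hs0, zero_smul]

lemma Gmat_mul_inv (g : DegMetric d) (ℓ : VecField d) (ω : OneForm d)
    (hC : IsCarroll g ℓ) (hωℓ : ∀ p, (∑ a, ω p a * ℓ p a) = 1) (p : Pt d) (a b : Fin d) :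
    ∑ e, Gmat g ω p a e * (Gmat g ω p)⁻¹ e b = if a = b then 1 else 0 := by
  have h := Matrix.mul_nonsing_inv (Gmat g ω p)
    (Gmat_posDef g ℓ ω hC hωℓ p).det_pos.ne'.isUnit
  have h2 := congrFun (congrFun h a) b
  simpa [Matrix.mul_apply, Matrix.one_apply] using h2

lemma Gmat_inv_mul (g : DegMetric d) (ℓ : VecField d) (ω : OneForm d)
    (hC : IsCarroll g ℓ) (hωℓ : ∀ p, (∑ a, ω p a * ℓ p a) = 1) (p : Pt d) (a b : Fin d) :
    ∑ e, (Gmat g ω p)⁻¹ a e * Gmat g ω p e b = if a = b then 1 else 0 := by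
  have h := Matrix.nonsing_inv_mul (Gmat g ω p)
    (Gmat_posDef g ℓ ω hC hωℓ p).det_pos.ne'.isUnit
  have h2 := congrFun (congrFun h a) b
  simpa [Matrix.mul_apply, Matrix.one_apply] using h2

lemma Gmat_inv_symm (g : DegMetric d) (ℓ : VecField d) (ω : OneForm d)
    (hC : IsCarroll g ℓ) (hωℓ : ∀ p, (∑ a, ω p a * ℓ p a) = 1) (p : Pt d) (a b : Fin d) :
    (Gmat g ω p)⁻¹ a b = (Gmat g ω p)⁻¹ b a := by
  have h := (Gmat_posDef g ℓ ω hC hωℓ p).isHermitian.inv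
  have h2 := h.apply a b
  simpa using h2.symm

lemma Gmat_mulVec_ℓ (g : DegMetric d) (ℓ : VecField d) (ω : OneForm d)
    (hC : IsCarroll g ℓ) (hωℓ : ∀ p, (∑ a, ω p a * ℓ p a) = 1) (p : Pt d) (a : Fin d) :
    ∑ b, Gmat g ω p a b * ℓ p b = ω p a := by
  have h1 : ∑ b, g p a b * ℓ p b = 0 := by
    calc ∑ b, g p a b * ℓ p b = ∑ b, g p b a * ℓ p b :=
          Finset.sum_congr rfl fun b _ => by rw [hC.symm p a b]
      _ = 0 := hC.null p a
  calc ∑ b, Gmat g ω p a b * ℓ p b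
      = ∑ b, (g p a b * ℓ p b + ω p a * (ω p b * ℓ p b)) := by
        refine Finset.sum_congr rfl fun b _ => ?_
        simp only [Gmat, Matrix.of_apply]; ring
    _ = (∑ b, g p a b * ℓ p b) + ω p a * ∑ b, ω p b * ℓ p b := by
        rw [Finset.sum_add_distrib, Finset.mul_sum]
    _ = ω p a := by rw [h1, hωℓ p]; ring

lemma Gmat_inv_mulVec_ω (g : DegMetric d) (ℓ : VecField d) (ω : OneForm d)
    (hC : IsCarroll g ℓ) (hωℓ : ∀ p, (∑ a, ω p a * ℓ p a) = 1) (p : Pt d) (a : Fin d) :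
    ∑ c, (Gmat g ω p)⁻¹ a c * ω p c = ℓ p a := by
  calc ∑ c, (Gmat g ω p)⁻¹ a c * ω p c
      = ∑ c, (Gmat g ω p)⁻¹ a c * ∑ e, Gmat g ω p c e * ℓ p e := by
        refine Finset.sum_congr rfl fun c _ => by rw [Gmat_mulVec_ℓ g ℓ ω hC hωℓ p c]
    _ = ∑ e, (∑ c, (Gmat g ω p)⁻¹ a c * Gmat g ω p c e) * ℓ p e :=
        sum_mul_sum_assoc _ _ _
    _ = ∑ e, (if a = e then 1 else 0) * ℓ p e := by
        refine Finset.sum_congr rfl fun e _ => by rw [Gmat_inv_mul g ℓ ω hC hωℓ p a e]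
    _ = ℓ p a := by simp

/-! ### The canonical minimal section -/

/-- `V_b = T(ℓ, ∂_b)` for the canonical minimal section. -/
def Vmin (g : DegMetric d) (ℓ : VecField d) (ω : OneForm d) (p : Pt d) (b : Fin d) : Pt d :=
  fun e => ∑ c, (Gmat g ω p)⁻¹ e c *
    ((1/2) * lieMet ℓ g p b c + lieForm ℓ ω p b * ω p c)

/-- The canonical minimal section. -/
def Tmin (g : DegMetric d) (ℓ : VecField d) (ω : OneForm d) :
    Pt d → Fin d → Fin d → Fin d → ℝ :=
  fun p e a b => ω p a * Vmin g ℓ ω p b e - ω p b * Vmin g ℓ ω p a e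

lemma omega_Vmin (g : DegMetric d) (ℓ : VecField d) (ω : OneForm d)
    (hC : IsCarroll g ℓ) (hωℓ : ∀ p, (∑ a, ω p a * ℓ p a) = 1) (p : Pt d) (b : Fin d) :
    ∑ e, ω p e * Vmin g ℓ ω p b e = lieForm ℓ ω p b := by
  unfold Vmin
  refine (sum_mul_sum_assoc _ _ _).trans ?_
  have hcoef : ∀ c, ∑ e, ω p e * (Gmat g ω p)⁻¹ e c = ℓ p c := by
    intro c
    calc ∑ e, ω p e * (Gmat g ω p)⁻¹ e c = ∑ e, (Gmat g ω p)⁻¹ c e * ω p e :=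
          Finset.sum_congr rfl fun e _ => by
            rw [Gmat_inv_symm g ℓ ω hC hωℓ p e c]; ring
      _ = ℓ p c := Gmat_inv_mulVec_ω g ℓ ω hC hωℓ p c
  calc ∑ c, (∑ e, ω p e * (Gmat g ω p)⁻¹ e c) *
        ((1/2) * lieMet ℓ g p b c + lieForm ℓ ω p b * ω p c)
      = ∑ c, ((1/2) * (lieMet ℓ g p b c * ℓ p c)
          + lieForm ℓ ω p b * (ω p c * ℓ p c)) := by
        refine Finset.sum_congr rfl fun c _ => by rw [hcoef c]; ring
    _ = (1/2) * (∑ c, lieMet ℓ g p b c * ℓ p c)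
          + lieForm ℓ ω p b * ∑ c, ω p c * ℓ p c := by
        rw [Finset.sum_add_distrib, Finset.mul_sum, Finset.mul_sum]
    _ = lieForm ℓ ω p b := by
        rw [carroll_F1 g ℓ hC p b, hωℓ p]; ring

lemma g_Vmin (g : DegMetric d) (ℓ : VecField d) (ω : OneForm d)
    (hC : IsCarroll g ℓ) (hωℓ : ∀ p, (∑ a, ω p a * ℓ p a) = 1) (p : Pt d) (b c : Fin d) :
    ∑ e, g p e c * Vmin g ℓ ω p b e = (1/2) * lieMet ℓ g p b c := by
  have hGV : ∑ e, Gmat g ω p c e * Vmin g ℓ ω p b e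
      = (1/2) * lieMet ℓ g p b c + lieForm ℓ ω p b * ω p c := by
    unfold Vmin
    refine (sum_mul_sum_assoc _ _ _).trans ?_
    calc ∑ x, (∑ e, Gmat g ω p c e * (Gmat g ω p)⁻¹ e x) *
          ((1/2) * lieMet ℓ g p b x + lieForm ℓ ω p b * ω p x)
        = ∑ x, (if c = x then 1 else 0) *
            ((1/2) * lieMet ℓ g p b x + lieForm ℓ ω p b * ω p x) := by
          refine Finset.sum_congr rfl fun x _ => by
            rw [Gmat_mul_inv g ℓ ω hC hωℓ p c x]
      _ = (1/2) * lieMet ℓ g p b c + lieForm ℓ ω p b * ω p c := by simp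
  have hωV := omega_Vmin g ℓ ω hC hωℓ p b
  calc ∑ e, g p e c * Vmin g ℓ ω p b e
      = ∑ e, (Gmat g ω p c e * Vmin g ℓ ω p b e
          - ω p c * (ω p e * Vmin g ℓ ω p b e)) := by
        refine Finset.sum_congr rfl fun e _ => ?_
        have hge : g p e c = Gmat g ω p c e - ω p c * ω p e := by
          simp only [Gmat, Matrix.of_apply]
          rw [hC.symm p e c]; ring
        rw [hge]; ring
    _ = (∑ e, Gmat g ω p c e * Vmin g ℓ ω p b e)
          - ω p c * ∑ e, ω p e * Vmin g ℓ ω p b e := by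
        rw [Finset.sum_sub_distrib, Finset.mul_sum]
    _ = (1/2) * lieMet ℓ g p b c := by rw [hGV, hωV]; ring

lemma Tmin_isMinimal (g : DegMetric d) (ℓ : VecField d) (ω : OneForm d)
    (hC : IsCarroll g ℓ) (hω : ∀ a, SmoothFn (fun p => ω p a))
    (hωℓ : ∀ p, (∑ a, ω p a * ℓ p a) = 1) :
    IsMinimal g ℓ ω (Tmin g ℓ ω) := by
  refine ⟨fun p a b c => by unfold Tmin; ring, ?_, ?_, ?_⟩
  · -- metric condition
    intro p b c
    calc ∑ e, ∑ a, g p e c * Tmin g ℓ ω p e a b * ℓ p a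
        = ∑ a, ∑ e, g p e c * Tmin g ℓ ω p e a b * ℓ p a := Finset.sum_comm
      _ = ∑ a, ((ω p a * ℓ p a) * (∑ e, g p e c * Vmin g ℓ ω p b e)
            - (ω p b * ℓ p a) * (∑ e, g p e c * Vmin g ℓ ω p a e)) := by
          refine Finset.sum_congr rfl fun a _ => ?_
          rw [Finset.mul_sum, Finset.mul_sum, ← Finset.sum_sub_distrib]
          refine Finset.sum_congr rfl fun e _ => ?_
          unfold Tmin; ring
      _ = ∑ a, ((ω p a * ℓ p a) * ((1/2) * lieMet ℓ g p b c)
            - (ω p b * ℓ p a) * ((1/2) * lieMet ℓ g p a c)) := by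
          refine Finset.sum_congr rfl fun a _ => by
            rw [g_Vmin g ℓ ω hC hωℓ p b c, g_Vmin g ℓ ω hC hωℓ p a c]
      _ = (∑ a, ω p a * ℓ p a) * ((1/2) * lieMet ℓ g p b c)
            - (ω p b * (1/2)) * ∑ a, lieMet ℓ g p c a * ℓ p a := by
          rw [Finset.sum_sub_distrib, ← Finset.sum_mul, Finset.mul_sum]
          congr 1
          refine Finset.sum_congr rfl fun a _ => by
            rw [lieMet_symm g ℓ hC p c a]; ring
      _ = (1/2) * lieMet ℓ g p b c := by
          rw [hωℓ p, carroll_F1 g ℓ hC p c]; ring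
  · -- Ehresmann condition
    intro p b
    calc ∑ e, ∑ a, ω p e * Tmin g ℓ ω p e a b * ℓ p a
        = ∑ a, ∑ e, ω p e * Tmin g ℓ ω p e a b * ℓ p a := Finset.sum_comm
      _ = ∑ a, ((ω p a * ℓ p a) * (∑ e, ω p e * Vmin g ℓ ω p b e)
            - (ω p b * ℓ p a) * (∑ e, ω p e * Vmin g ℓ ω p a e)) := by
          refine Finset.sum_congr rfl fun a _ => ?_
          rw [Finset.mul_sum, Finset.mul_sum, ← Finset.sum_sub_distrib]
          refine Finset.sum_congr rfl fun e _ => ?_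
          unfold Tmin; ring
      _ = ∑ a, ((ω p a * ℓ p a) * lieForm ℓ ω p b
            - (ω p b * ℓ p a) * lieForm ℓ ω p a) := by
          refine Finset.sum_congr rfl fun a _ => by
            rw [omega_Vmin g ℓ ω hC hωℓ p b, omega_Vmin g ℓ ω hC hωℓ p a]
      _ = (∑ a, ω p a * ℓ p a) * lieForm ℓ ω p b
            - ω p b * ∑ a, lieForm ℓ ω p a * ℓ p a := by
          rw [Finset.sum_sub_distrib, ← Finset.sum_mul, Finset.mul_sum]
          congr 1
          exact Finset.sum_congr rfl fun a _ => by ring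
      _ = lieForm ℓ ω p b := by
          rw [hωℓ p, carroll_F2 ℓ ω hC.smooth_ℓ hω hωℓ p]; ring
  · -- kernel condition
    intro p u v hu hv c
    calc ∑ a, ∑ b, Tmin g ℓ ω p c a b * u a * v b
        = ∑ a, ∑ b, ((ω p a * u a) * (Vmin g ℓ ω p b c * v b)
            - (ω p b * v b) * (Vmin g ℓ ω p a c * u a)) := by
          refine Finset.sum_congr rfl fun a _ => Finset.sum_congr rfl fun b _ => ?_
          unfold Tmin; ring
      _ = (∑ a, ∑ b, (ω p a * u a) * (Vmin g ℓ ω p b c * v b))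
            - ∑ a, ∑ b, (ω p b * v b) * (Vmin g ℓ ω p a c * u a) := by
          simp only [Finset.sum_sub_distrib]
      _ = (∑ a, ω p a * u a) * (∑ b, Vmin g ℓ ω p b c * v b)
            - (∑ b, ω p b * v b) * (∑ a, Vmin g ℓ ω p a c * u a) := by
          rw [Finset.sum_mul_sum]
          congr 1
          rw [Finset.sum_mul_sum]
          exact Finset.sum_comm
      _ = 0 := by rw [hu, hv]; ring

/-! ### Uniqueness -/

lemma minimal_unique (g : DegMetric d) (ℓ : VecField d) (ω : OneForm d)
    (hC : IsCarroll g ℓ) (hωℓ : ∀ p, (∑ a, ω p a * ℓ p a) = 1)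
    (T₁ T₂ : Pt d → Fin d → Fin d → Fin d → ℝ)
    (h₁ : IsMinimal g ℓ ω T₁) (h₂ : IsMinimal g ℓ ω T₂) : T₁ = T₂ := by
  obtain ⟨a1, g1, w1, k1⟩ := h₁
  obtain ⟨a2, g2, w2, k2⟩ := h₂
  funext p c a b
  -- Step 1: the contracted difference vanishes.
  have hW : ∀ b' e, ∑ x, (T₁ p e x b' - T₂ p e x b') * ℓ p x = 0 := by
    intro b'
    set W : Pt d := fun e => ∑ x, (T₁ p e x b' - T₂ p e x b') * ℓ p x with hWdef
    have hgW : ∀ c', ∑ e, g p e c' * W e = 0 := by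
      intro c'
      calc ∑ e, g p e c' * W e
          = ∑ e, ∑ x, (g p e c' * T₁ p e x b' * ℓ p x
              - g p e c' * T₂ p e x b' * ℓ p x) := by
            refine Finset.sum_congr rfl fun e _ => ?_
            rw [hWdef, Finset.mul_sum]
            exact Finset.sum_congr rfl fun x _ => by ring
        _ = (∑ e, ∑ x, g p e c' * T₁ p e x b' * ℓ p x)
              - ∑ e, ∑ x, g p e c' * T₂ p e x b' * ℓ p x := by
            simp only [Finset.sum_sub_distrib]
        _ = 0 := by rw [g1 p b' c', g2 p b' c']; ring
    have hωW : ∑ e, ω p e * W e = 0 := by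
      calc ∑ e, ω p e * W e
          = ∑ e, ∑ x, (ω p e * T₁ p e x b' * ℓ p x
              - ω p e * T₂ p e x b' * ℓ p x) := by
            refine Finset.sum_congr rfl fun e _ => ?_
            rw [hWdef, Finset.mul_sum]
            exact Finset.sum_congr rfl fun x _ => by ring
        _ = (∑ e, ∑ x, ω p e * T₁ p e x b' * ℓ p x)
              - ∑ e, ∑ x, ω p e * T₂ p e x b' * ℓ p x := by
            simp only [Finset.sum_sub_distrib]
        _ = 0 := by rw [w1 p b', w2 p b']; ring
    obtain ⟨k, hk⟩ := hC.radical p W hgW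
    have hk0 : k = 0 := by
      rw [hk] at hωW
      calc k = k * ∑ x, ω p x * ℓ p x := by rw [hωℓ p]; ring
        _ = ∑ x, ω p x * (k • ℓ p) x := by
            rw [Finset.mul_sum]
            exact Finset.sum_congr rfl fun x _ => by simp [Pi.smul_apply]; ring
        _ = 0 := hωW
    have hW0 : W = 0 := by rw [hk, hk0, zero_smul]
    intro e
    have hWe := congrFun hW0 e
    simpa [hWdef] using hWe
  -- Step 2: apply the kernel condition to projected coordinate vectors.
  set u : Pt d := fun x => (if x = a then 1 else 0) - ω p a * ℓ p x with hudef
  set v : Pt d := fun x => (if x = b then 1 else 0) - ω p b * ℓ p x with hvdef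
  have hker : ∀ (i : Fin d), ∑ x, ω p x *
      ((if x = i then 1 else 0) - ω p i * ℓ p x) = 0 := by
    intro i
    calc ∑ x, ω p x * ((if x = i then 1 else 0) - ω p i * ℓ p x)
        = (∑ x, ω p x * (if x = i then 1 else 0))
            - ω p i * ∑ x, ω p x * ℓ p x := by
          rw [Finset.mul_sum, ← Finset.sum_sub_distrib]
          exact Finset.sum_congr rfl fun x _ => by ring
      _ = 0 := by rw [sum_delta_mul (fun x => ω p x) i, hωℓ p]; ring
  have hu : ∑ x, ω p x * u x = 0 := hker a
  have hv : ∑ x, ω p x * v x = 0 := hker b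
  have hdiff : ∑ x, ∑ y, (T₁ p c x y - T₂ p c x y) * u x * v y = 0 := by
    calc ∑ x, ∑ y, (T₁ p c x y - T₂ p c x y) * u x * v y
        = ∑ x, ∑ y, (T₁ p c x y * u x * v y - T₂ p c x y * u x * v y) := by
          refine Finset.sum_congr rfl fun x _ => Finset.sum_congr rfl fun y _ => by ring
      _ = (∑ x, ∑ y, T₁ p c x y * u x * v y)
            - ∑ x, ∑ y, T₂ p c x y * u x * v y := by
          simp only [Finset.sum_sub_distrib]
      _ = 0 := by rw [k1 p u v hu hv c, k2 p u v hu hv c]; ring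
  -- Step 3: evaluate the double sum.
  have hanti : ∀ y, ∑ x, (T₁ p c y x - T₂ p c y x) * ℓ p x = 0 := by
    intro y
    calc ∑ x, (T₁ p c y x - T₂ p c y x) * ℓ p x
        = ∑ x, -((T₁ p c x y - T₂ p c x y) * ℓ p x) := by
          refine Finset.sum_congr rfl fun x _ => by
            rw [a1 p c x y, a2 p c x y]; ring
      _ = -∑ x, (T₁ p c x y - T₂ p c x y) * ℓ p x := by rw [Finset.sum_neg_distrib]
      _ = 0 := by rw [hW y c]; ring
  have hinner : ∀ y, ∑ x, (T₁ p c x y - T₂ p c x y) * u x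
      = T₁ p c a y - T₂ p c a y := by
    intro y
    calc ∑ x, (T₁ p c x y - T₂ p c x y) * u x
        = ∑ x, ((T₁ p c x y - T₂ p c x y) * (if x = a then 1 else 0)
            - ω p a * ((T₁ p c x y - T₂ p c x y) * ℓ p x)) := by
          refine Finset.sum_congr rfl fun x _ => ?_
          rw [hudef]; ring
      _ = (∑ x, (T₁ p c x y - T₂ p c x y) * (if x = a then 1 else 0))
            - ω p a * ∑ x, (T₁ p c x y - T₂ p c x y) * ℓ p x := by
          rw [Finset.sum_sub_distrib, Finset.mul_sum]
      _ = T₁ p c a y - T₂ p c a y := by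
          rw [sum_delta_mul (fun x => T₁ p c x y - T₂ p c x y) a, hW y c]; ring
  have hfinal : ∑ y, (T₁ p c a y - T₂ p c a y) * v y = 0 := by
    calc ∑ y, (T₁ p c a y - T₂ p c a y) * v y
        = ∑ y, (∑ x, (T₁ p c x y - T₂ p c x y) * u x) * v y := by
          refine Finset.sum_congr rfl fun y _ => by rw [hinner y]
      _ = ∑ y, ∑ x, (T₁ p c x y - T₂ p c x y) * u x * v y := by
          refine Finset.sum_congr rfl fun y _ => Finset.sum_mul ..
      _ = ∑ x, ∑ y, (T₁ p c x y - T₂ p c x y) * u x * v y := Finset.sum_comm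
      _ = 0 := hdiff
  have hend : T₁ p c a b - T₂ p c a b = 0 := by
    calc T₁ p c a b - T₂ p c a b
        = (∑ y, (T₁ p c a y - T₂ p c a y) * (if y = b then 1 else 0))
            - ω p b * ∑ y, (T₁ p c a y - T₂ p c a y) * ℓ p y := by
          rw [sum_delta_mul (fun y => T₁ p c a y - T₂ p c a y) b, hanti a]; ring
      _ = ∑ y, ((T₁ p c a y - T₂ p c a y) * (if y = b then 1 else 0)
            - ω p b * ((T₁ p c a y - T₂ p c a y) * ℓ p y)) := by
          rw [Finset.sum_sub_distrib, Finset.mul_sum]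
      _ = ∑ y, (T₁ p c a y - T₂ p c a y) * v y := by
          refine Finset.sum_congr rfl fun y _ => ?_
          rw [hvdef]; ring
      _ = 0 := hfinal
  linarith [hend]

/-- On a Carrollian structure equipped with an Ehresmann connection `ω`
(`ω(ℓ) = 1`) there is a unique minimal section `T ∈ Γ(TM ⊗ Λ²T*M)`. -/
theorem stmt1 {d : ℕ} (g : DegMetric d) (ℓ : VecField d) (ω : OneForm d)
    (hC : IsCarroll g ℓ)
    (hω : ∀ a, SmoothFn (fun p => ω p a))
    (hωℓ : ∀ p, (∑ a, ω p a * ℓ p a) = 1) :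
    ∃! T : Pt d → Fin d → Fin d → Fin d → ℝ, IsMinimal g ℓ ω T := by
  refine ⟨Tmin g ℓ ω, Tmin_isMinimal g ℓ ω hC hω hωℓ, fun T' hT' =>
    minimal_unique g ℓ ω hC hωℓ T' (Tmin g ℓ ω) hT' (Tmin_isMinimal g ℓ ω hC hω hωℓ)⟩

end
end

section
/- Let (Σ, ḡ) be a flat 2-dimensional Riemannian manifold (zero scalar curvature, hence locally isometric to Euclidean ℝ²), and let ᾱ be a 1-form on Σ such that B_{ab} := ḡ_{ab} − ∇̄_{(a}ᾱ_{b)} is the Hessian of some smooth function h (i.e. ∇̄²h = B). Then, in Euclidean coordinates (x,y), ∂_x ᾱ_y − ∂_y ᾱ_x is constant; equivalently, dᾱ is a constant multiple of the volume form of (Σ, ḡ). -/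
open scoped BigOperators

noncomputable section

variable {d : ℕ}

lemma smooth_pd {f : Pt d → ℝ} (hf : ContDiff ℝ (⊤ : ℕ∞) f) (b : Fin d) :
    ContDiff ℝ (⊤ : ℕ∞) (fun q => pd b f q) :=
  (hf.fderiv_right (by simp)).clm_apply contDiff_const

lemma pd_eq_snd {f : Pt d → ℝ} (hf : ContDiff ℝ (⊤ : ℕ∞) f) (a b : Fin d) (p : Pt d) :
    pd a (fun q => pd b f q) p = fderiv ℝ (fderiv ℝ f) p (Pi.single a 1) (Pi.single b 1) := by
  have hdf : DifferentiableAt ℝ (fderiv ℝ f) p :=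
    ((hf.fderiv_right (m := (⊤ : ℕ∞)) (by simp)).differentiable (by simp)) p
  unfold pd
  rw [fderiv_clm_apply hdf (differentiableAt_const _)]
  simp

lemma pd_comm {f : Pt d → ℝ} (hf : ContDiff ℝ (⊤ : ℕ∞) f) (a b : Fin d) (p : Pt d) :
    pd a (fun q => pd b f q) p = pd b (fun q => pd a f q) p := by
  rw [pd_eq_snd hf, pd_eq_snd hf]
  exact (hf.contDiffAt.isSymmSndFDerivAt (by rw [minSmoothness_of_isRCLikeNormedField]; exact WithTop.coe_le_coe.mpr le_top)) _ _

lemma pd_sub {u v : Pt d → ℝ} {p : Pt d} (hu : DifferentiableAt ℝ u p)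
    (hv : DifferentiableAt ℝ v p) (a : Fin d) :
    pd a (fun q => u q - v q) p = pd a u p - pd a v p := by
  unfold pd; rw [fderiv_fun_sub hu hv]; simp

lemma pd_add {u v : Pt d → ℝ} {p : Pt d} (hu : DifferentiableAt ℝ u p)
    (hv : DifferentiableAt ℝ v p) (a : Fin d) :
    pd a (fun q => u q + v q) p = pd a u p + pd a v p := by
  unfold pd; rw [fderiv_fun_add hu hv]; simp

lemma pd_const_sub_half {u : Pt d → ℝ} (hu : ContDiff ℝ (⊤ : ℕ∞) u) (K : ℝ) (c : Fin d) (p : Pt d) :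
    pd c (fun q => K - u q / 2) p = - pd c u p / 2 := by
  have h1 : (fun q => K - u q / 2) = fun q => K - (2⁻¹ : ℝ) * u q := by funext q; ring
  unfold pd
  rw [h1, fderiv_const_sub, fderiv_const_mul ((hu.differentiable (by simp)) p)]
  simp; ring


/-- On flat Euclidean `ℝ²`, if `B_{ab} := δ_{ab} - ∂_{(a}ᾱ_{b)}` is the
Hessian of a smooth function `h`, then `∂_x ᾱ_y - ∂_y ᾱ_x` is constant, i.e. `dᾱ` is a
constant multiple of the volume form. -/
theorem stmt7 (α : OneForm 2) (hα : ∀ a, SmoothFn (fun p => α p a))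
    (h : Pt 2 → ℝ) (hh : ContDiff ℝ (⊤ : ℕ∞) h)
    (hHess : ∀ p a b, pd a (fun q => pd b h q) p
        = (if a = b then (1:ℝ) else 0)
          - (pd a (fun q => α q b) p + pd b (fun q => α q a) p) / 2) :
    ∃ c : ℝ, ∀ p : Pt 2, pd 0 (fun q => α q 1) p - pd 1 (fun q => α q 0) p = c := by
  have hαs : ∀ a : Fin 2, ContDiff ℝ (⊤ : ℕ∞) (fun p => α p a) := hα
  set S : Fin 2 → Fin 2 → Pt 2 → ℝ :=
    fun a b q => pd a (fun r => α r b) q + pd b (fun r => α r a) q with hS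
  have hSsm : ∀ a b, ContDiff ℝ (⊤ : ℕ∞) (S a b) := fun a b =>
    (smooth_pd (hαs b) a).add (smooth_pd (hαs a) b)
  have hfun : ∀ a b : Fin 2, (fun q => pd a (fun r => pd b h r) q)
      = fun q => (if a = b then (1:ℝ) else 0) - S a b q / 2 := by
    intro a b; funext q; exact hHess q a b
  have key : ∀ (a b c : Fin 2) (p : Pt 2), pd c (S a b) p = pd a (S c b) p := by
    intro a b c p
    have e1 : pd c (fun q => pd a (fun r => pd b h r) q) p
        = pd a (fun q => pd c (fun r => pd b h r) q) p :=
      pd_comm (smooth_pd hh b) c a p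
    rw [hfun a b, hfun c b, pd_const_sub_half (hSsm a b), pd_const_sub_half (hSsm c b)] at e1
    linarith
  -- expand key into second partials of α
  have keyx : ∀ (a b c : Fin 2) (p : Pt 2),
      pd c (fun q => pd a (fun r => α r b) q) p + pd c (fun q => pd b (fun r => α r a) q) p
      = pd a (fun q => pd c (fun r => α r b) q) p + pd a (fun q => pd b (fun r => α r c) q) p := by
    intro a b c p
    have := key a b c p
    rw [hS] at this
    rwa [pd_add ((smooth_pd (hαs b) a).differentiable (by simp) p)
          ((smooth_pd (hαs a) b).differentiable (by simp) p),
        pd_add ((smooth_pd (hαs b) c).differentiable (by simp) p)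
          ((smooth_pd (hαs c) b).differentiable (by simp) p)] at this
  set F : Pt 2 → ℝ := fun q => pd 0 (fun r => α r 1) q - pd 1 (fun r => α r 0) q with hF
  have hFd : Differentiable ℝ F :=
    ((smooth_pd (hαs 1) 0).sub (smooth_pd (hαs 0) 1)).differentiable (by simp)
  have hpdF : ∀ (a : Fin 2) (p : Pt 2), pd a F p = 0 := by
    intro a p
    rw [hF, pd_sub ((smooth_pd (hαs 1) 0).differentiable (by simp) p)
        ((smooth_pd (hαs 0) 1).differentiable (by simp) p)]
    fin_cases a <;> simp only [Fin.zero_eta, Fin.mk_one]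
    · have k1 := keyx 1 0 0 p
      have sc := pd_comm (hαs 0) 0 1 p
      linarith
    · have k1 := keyx 0 1 1 p
      have sc := pd_comm (hαs 1) 1 0 p
      linarith
  have hz : ∀ p, fderiv ℝ F p = 0 := by
    intro p
    ext v
    have hrep : v = v 0 • (Pi.single 0 1 : Pt 2) + v 1 • (Pi.single 1 1 : Pt 2) := by
      funext i; fin_cases i <;> simp
    rw [hrep, map_add, map_smul, map_smul]
    have h0 : fderiv ℝ F p (Pi.single (0 : Fin 2) 1) = 0 := hpdF 0 p
    have h1 : fderiv ℝ F p (Pi.single (1 : Fin 2) 1) = 0 := hpdF 1 p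
    simp [h0, h1]
  exact ⟨F (fun _ => 0), fun p => is_const_of_fderiv_eq_zero hFd hz p _⟩


end
end

section
/- Let (M,g,ℓ) be a Carrollian structure with affine connection ∇ satisfying ∇ℓ=0, ∇g=0, and an Ehresmann connection ω with ω(ℓ)=1 such that the torsion T of ∇ is minimal with respect to (M,g,ℓ,ω). Let V_b := T^a_{ab} be the trace of the torsion. If V(ℓ) ≠ 0, then (V − L_ℓ ω)/V(ℓ) = ω; that is, the Ehresmann connection can be recovered from the torsion trace via ω_b = (V_b − (L_ℓ ω)_b)/V(ℓ). -/
open scoped BigOperators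

noncomputable section

variable {d : ℕ}

/-- On a Carrollian structure with `∇ℓ = 0`, `∇g = 0` and torsion minimal
with respect to an Ehresmann connection `ω`, if the trace `V_b = T^a_{ab}` of the torsion
satisfies `V(ℓ) ≠ 0`, then `ω` can be recovered as `ω_b = (V_b - (L_ℓ ω)_b)/V(ℓ)`. -/
theorem stmt11 {d : ℕ} (g : DegMetric d) (ℓ : VecField d) (ω : OneForm d) (Γ : Conn d)
    (hC : IsCarroll g ℓ)
    (hω : ∀ a, SmoothFn (fun p => ω p a))
    (hωℓ : ∀ p, (∑ a, ω p a * ℓ p a) = 1)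
    (hΓ : ∀ a b c, SmoothFn (fun p => Γ p a b c))
    (hpar_ℓ : ∀ p a c, covVec Γ ℓ p a c = 0)
    (hpar_g : ∀ p a b c, covT2 Γ g p a b c = 0)
    (hmin : MinimalTorsion g ℓ ω Γ)
    (hV : ∀ p : Pt d, (∑ b, (∑ a, tor Γ p a a b) * ℓ p b) ≠ 0) :
    ∀ p b, ((∑ a, tor Γ p a a b) - lieForm ℓ ω p b)
        / (∑ c, (∑ a, tor Γ p a a c) * ℓ p c) = ω p b := by
  intro p b
  obtain ⟨h1, h2s, h3, h4⟩ := hmin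
  simp only [] at h1 h3 h4
  -- S c i = T^c_{a i} ℓ^a
  set S : Fin d → Fin d → ℝ := fun c i => ∑ a, tor Γ p c a i * ℓ p a with hSdef
  -- Contracting the antisymmetric torsion twice with ℓ gives 0
  have hzero : ∀ c, (∑ x, ∑ y, tor Γ p c x y * ℓ p x * ℓ p y) = 0 := by
    intro c
    have hsym : (∑ x, ∑ y, tor Γ p c x y * ℓ p x * ℓ p y)
        = -(∑ x, ∑ y, tor Γ p c x y * ℓ p x * ℓ p y) := by
      have e1 : (∑ x, ∑ y, tor Γ p c x y * ℓ p x * ℓ p y)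
          = ∑ x, ∑ y, -(tor Γ p c y x * ℓ p y * ℓ p x) := by
        refine Finset.sum_congr rfl fun x _ => Finset.sum_congr rfl fun y _ => ?_
        rw [h1]; ring
      calc (∑ x, ∑ y, tor Γ p c x y * ℓ p x * ℓ p y)
          = ∑ x, ∑ y, -(tor Γ p c y x * ℓ p y * ℓ p x) := e1
        _ = ∑ y, ∑ x, -(tor Γ p c y x * ℓ p y * ℓ p x) := Finset.sum_comm
        _ = -(∑ y, ∑ x, tor Γ p c y x * ℓ p y * ℓ p x) := by
              simp only [Finset.sum_neg_distrib]
    linarith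
  have hSl : ∀ c, (∑ y, S c y * ℓ p y) = 0 := by
    intro c
    have : (∑ y, S c y * ℓ p y) = ∑ y, ∑ x, tor Γ p c x y * ℓ p x * ℓ p y := by
      refine Finset.sum_congr rfl fun y _ => ?_
      rw [hSdef]
      rw [Finset.sum_mul]
    rw [this, Finset.sum_comm, hzero]
  -- main structural identity for minimal torsion
  have hT : ∀ c i j, tor Γ p c i j = ω p i * S c j - ω p j * S c i := by
    intro c i j
    set u : Pt d := fun a => (if a = i then 1 else 0) - ω p i * ℓ p a with hu_def
    set v : Pt d := fun a => (if a = j then 1 else 0) - ω p j * ℓ p a with hv_def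
    have hu : (∑ a, ω p a * u a) = 0 := by
      simp only [hu_def, mul_sub, Finset.sum_sub_distrib, mul_ite, mul_one, mul_zero,
        Finset.sum_ite_eq', Finset.mem_univ, if_true]
      rw [show (∑ a, ω p a * (ω p i * ℓ p a)) = ω p i * ∑ a, ω p a * ℓ p a by
        rw [Finset.mul_sum]; exact Finset.sum_congr rfl fun a _ => by ring]
      rw [hωℓ p]; ring
    have hv : (∑ a, ω p a * v a) = 0 := by
      simp only [hv_def, mul_sub, Finset.sum_sub_distrib, mul_ite, mul_one, mul_zero,
        Finset.sum_ite_eq', Finset.mem_univ, if_true]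
      rw [show (∑ a, ω p a * (ω p j * ℓ p a)) = ω p j * ∑ a, ω p a * ℓ p a by
        rw [Finset.mul_sum]; exact Finset.sum_congr rfl fun a _ => by ring]
      rw [hωℓ p]; ring
    have h0 := h4 p u v hu hv c
    have expand : ∀ x y, tor Γ p c x y * u x * v y
        = (if x = i then (if y = j then tor Γ p c x y else 0) else 0)
          - ω p j * (if x = i then tor Γ p c x y * ℓ p y else 0)
          - ω p i * (if y = j then tor Γ p c x y * ℓ p x else 0)
          + ω p i * ω p j * (tor Γ p c x y * ℓ p x * ℓ p y) := by
      intro x y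
      rw [hu_def, hv_def]
      by_cases hx : x = i <;> by_cases hy : y = j <;> simp [hx, hy] <;> ring
    rw [Finset.sum_congr rfl (fun x _ => Finset.sum_congr rfl (fun y _ => expand x y))] at h0
    simp only [Finset.sum_add_distrib, Finset.sum_sub_distrib, ← Finset.mul_sum,
      Finset.sum_ite_eq', Finset.mem_univ, if_true] at h0
    rw [hzero c] at h0
    have hfst : (∑ x : Fin d, ∑ y : Fin d,
        if x = i then if y = j then tor Γ p c x y else 0 else 0) = tor Γ p c i j := by
      simp
    have hmid : (∑ x : Fin d, ∑ y : Fin d,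
        if x = i then tor Γ p c x y * ℓ p y else 0) = ∑ y, tor Γ p c i y * ℓ p y := by
      rw [Finset.sum_comm]; simp
    rw [hfst, hmid] at h0
    -- ∑ y, tor c i y * ℓ y = - S c i  by antisymmetry
    have hflip : (∑ y, tor Γ p c i y * ℓ p y) = - S c i := by
      rw [hSdef]
      simp only [← Finset.sum_neg_distrib]
      refine Finset.sum_congr rfl fun y _ => ?_
      rw [h1]; ring
    rw [hflip] at h0
    have hthird : (∑ x, tor Γ p c x j * ℓ p x) = S c j := rfl
    rw [hthird] at h0
    linarith
  -- trace of S
  set tr : ℝ := ∑ a, S a a with htr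
  -- V_b - (L_ℓ ω)_b = - ω_b * tr
  have hlie : ∀ j, lieForm ℓ ω p j = ∑ e, ω p e * S e j := by
    intro j
    rw [← h3 p j]
    refine Finset.sum_congr rfl fun e _ => ?_
    rw [hSdef, Finset.mul_sum]
    exact Finset.sum_congr rfl fun a _ => by ring
  have hVcomp : ∀ j, (∑ a, tor Γ p a a j) = (∑ e, ω p e * S e j) - ω p j * tr := by
    intro j
    rw [htr, Finset.mul_sum, ← Finset.sum_sub_distrib]
    refine Finset.sum_congr rfl fun a _ => ?_
    rw [hT a a j]
  -- V(ℓ) = -tr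
  have hVl : (∑ c, (∑ a, tor Γ p a a c) * ℓ p c) = -tr := by
    have : (∑ c, (∑ a, tor Γ p a a c) * ℓ p c)
        = (∑ e, ω p e * (∑ c, S e c * ℓ p c)) - tr * (∑ c, ω p c * ℓ p c) := by
      rw [show (∑ e, ω p e * (∑ c, S e c * ℓ p c)) = ∑ c, ∑ e, ω p e * (S e c * ℓ p c) by
        rw [Finset.sum_comm]
        exact Finset.sum_congr rfl fun e _ => by rw [Finset.mul_sum]]
      rw [Finset.mul_sum, ← Finset.sum_sub_distrib]
      refine Finset.sum_congr rfl fun c _ => ?_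
      rw [hVcomp c, sub_mul, Finset.sum_mul]
      congr 1
      · exact Finset.sum_congr rfl fun e _ => by ring
      · ring
    rw [this, hωℓ p]
    rw [Finset.sum_congr rfl (fun e _ => by rw [hSl e] : ∀ e ∈ Finset.univ, ω p e * (∑ c, S e c * ℓ p c) = ω p e * 0)]
    simp
  rw [div_eq_iff (hV p), hVl, hVcomp b, hlie b]
  ring


end
end
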